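/- For every m ∈ (−1,1) and every q ∈ ℝ, the Curie-Weiss Lagrangian L(m,q) = −(1/2)·√(4(1−m²)+q²) + (q/2)·log((√(4(1−m²)+q²)+q)/(2(1−m))) + 1 satisfies L(m,q) ≥ 0, with equality if and only if q = −2m. -/

import Mathlib

/-!
Write `a = 1 - m`, `b = 1 + m`, `s = √(4ab + q²)` and `x = (s + q) / (2a) > 0`. Since
`(s + q)(s - q) = 4ab`, the pair `(s, q)` is parametrised by `s = a x + b/x`, `q = a x - b/x`, and
with `a + b = 2` the Lagrangian becomes `L = (a/2) φ(x) + (b/2) φ(1/x)` for the Kullback-Leibler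
function `φ(y) = y log y + 1 - y`. Both terms are nonnegative and vanish exactly at `x = 1`, which by
the parametrisation means `q = a - b = -2m`.
-/

/-- The Curie-Weiss Lagrangian for infinite-temperature spin-flip dynamics. -/
noncomputable def LCW (m q : ℝ) : ℝ :=
  -(1 / 2) * Real.sqrt (4 * (1 - m ^ 2) + q ^ 2) +
    (q / 2) * Real.log ((Real.sqrt (4 * (1 - m ^ 2) + q ^ 2) + q) / (2 * (1 - m))) + 1

open Real InformationTheory

/-- `cwRatio m q = exp (2 * ∂LCW/∂q (m, q))`. -/
noncomputable def cwRatio (m q : ℝ) : ℝ :=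
  (√(4 * (1 - m ^ 2) + q ^ 2) + q) / (2 * (1 - m))

section

variable {m : ℝ} (q : ℝ)

theorem sqrt_add_sq_add_self_pos {c : ℝ} (hc : 0 < c) : 0 < √(c + q ^ 2) + q := by
  have := Real.lt_sqrt_of_sq_lt (by linarith : (-q) ^ 2 < c + q ^ 2)
  linarith

theorem sqrt_add_self_pos (hm : m ∈ Set.Ioo (-1 : ℝ) 1) :
    0 < √(4 * (1 - m ^ 2) + q ^ 2) + q :=
  sqrt_add_sq_add_self_pos q (by nlinarith [hm.1, hm.2])

theorem sqrt_and_self_eq_cwRatio (hm : m ∈ Set.Ioo (-1 : ℝ) 1) :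
    √(4 * (1 - m ^ 2) + q ^ 2) = (1 - m) * cwRatio m q + (1 + m) * (cwRatio m q)⁻¹ ∧
      q = (1 - m) * cwRatio m q - (1 + m) * (cwRatio m q)⁻¹ := by
  have := sqrt_add_self_pos q hm
  have ha : 1 - m ≠ 0 := by linarith [hm.2]
  have hs := Real.sq_sqrt (by nlinarith [hm.1, hm.2] : 0 ≤ 4 * (1 - m ^ 2) + q ^ 2)
  rw [cwRatio, inv_div]
  constructor <;> field_simp
  · linear_combination hs
  · linear_combination -hs

theorem cwRatio_pos (hm : m ∈ Set.Ioo (-1 : ℝ) 1) : 0 < cwRatio m q :=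
  div_pos (sqrt_add_self_pos q hm) (by linarith [hm.2])

theorem LCW_eq_klFun (hm : m ∈ Set.Ioo (-1 : ℝ) 1) :
    LCW m q = (1 - m) / 2 * klFun (cwRatio m q) + (1 + m) / 2 * klFun (cwRatio m q)⁻¹ := by
  obtain ⟨hsqrt, hq⟩ := sqrt_and_self_eq_cwRatio q hm
  rw [LCW, klFun_apply, klFun_apply, Real.log_inv]
  change _ + q / 2 * log (cwRatio m q) + 1 = _
  linear_combination (-1 / 2) * hsqrt + (log (cwRatio m q) / 2) * hq

theorem cwRatio_eq_one_iff (hm : m ∈ Set.Ioo (-1 : ℝ) 1) : cwRatio m q = 1 ↔ q = -2 * m := by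
  constructor
  · intro hx
    have hq := (sqrt_and_self_eq_cwRatio q hm).2
    rw [hx] at hq
    linarith
  · rintro rfl
    have hs : √(4 * (1 - m ^ 2) + (-2 * m) ^ 2) = 2 := by
      rw [show 4 * (1 - m ^ 2) + (-2 * m) ^ 2 = 2 ^ 2 by ring]
      exact Real.sqrt_sq zero_le_two
    rw [cwRatio, hs, div_eq_one_iff_eq (by linarith [hm.2])]
    ring

end

theorem stmt5 (m : ℝ) (hm : m ∈ Set.Ioo (-1 : ℝ) 1) (q : ℝ) :
    0 ≤ LCW m q ∧ (LCW m q = 0 ↔ q = -2 * m) := by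
  set x := cwRatio m q
  have hx : 0 ≤ x := (cwRatio_pos q hm).le
  have ha : 0 < (1 - m) / 2 := by linarith [hm.2]
  have h₀ : 0 ≤ (1 - m) / 2 * klFun x := mul_nonneg ha.le (klFun_nonneg hx)
  have h₁ : 0 ≤ (1 + m) / 2 * klFun x⁻¹ :=
    mul_nonneg (by linarith [hm.1]) (klFun_nonneg (inv_nonneg.2 hx))
  rw [LCW_eq_klFun q hm, ← cwRatio_eq_one_iff q hm]
  refine ⟨add_nonneg h₀ h₁, fun h => ?_, fun h => by simp [h, klFun_one]⟩
  have hφx : (1 - m) / 2 * klFun x = 0 := ((add_eq_zero_iff_of_nonneg h₀ h₁).1 h).1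
  exact (klFun_eq_zero_iff hx).1 ((mul_eq_zero.1 hφx).resolve_left ha.ne')
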